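/- In the setting of the construction (r = sqrt(2 log n − log log n), y_i on S(r), y_i⁰ = (1+r^{−2})y_i, y_i¹,…,y_i^d vertices of a regular simplex of circumradius √2 centered at y_i in the tangent hyperplane H_i, Δ_i = conv(y_i⁰,…,y_i^d)), let 0 < c₂ < 1 be a fixed constant and for j ∈ {0,…,d} define the homothetic copy Δ_i^j := y_i^j + c₂·(Δ_i − y_i^j). Then for each i and each j ∈ {0,…,d}, vol_d(Δ_i^j) ≍ (log n)^{−1/2} and γ_d(Δ_i^j) ≍ n^{−1} as n → ∞, with implied constants depending only on d and c₂. -/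

import Mathlib

open MeasureTheory ProbabilityTheory Real Set Filter
open scoped ENNReal NNReal RealInnerProductSpace MeasureTheory

noncomputable section

abbrev Euc (d : ℕ) := EuclideanSpace ℝ (Fin d)

/-- The standard Gaussian measure `γ_d` on `ℝ^d`. -/
noncomputable def stdGaussian (d : ℕ) : Measure (Euc d) :=
  volume.withDensity fun x => ENNReal.ofReal ((2 * π) ^ (-(d : ℝ) / 2) * Real.exp (-‖x‖ ^ 2 / 2))

/-- The radius `r(n) = sqrt(2 log n − log log n)`. -/
noncomputable def rr (n : ℕ) : ℝ := Real.sqrt (2 * Real.log n - Real.log (Real.log n))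

/-- Configuration data for the simplex construction: `y` lies on the sphere of radius `r`,
and `yv 1, …, yv d` are the vertices of a regular `(d−1)`-dimensional simplex lying in the
tangent hyperplane of the sphere at `y`, with circumcentre `y` and circumradius `√2`. -/
structure SimplexConfig (d : ℕ) (r : ℝ) (y : Euc d) (yv : Fin d → Euc d) : Prop where
  norm_y : ‖y‖ = r
  mem_tangent : ∀ j, (inner ℝ (yv j) y : ℝ) = r ^ 2
  circumradius : ∀ j, ‖yv j - y‖ = Real.sqrt 2
  regular : ∃ s : ℝ, 0 < s ∧ ∀ j k : Fin d, j ≠ k → ‖yv j - yv k‖ = s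

/-- The apex `y⁰ = (1 + r^{−2}) y` of the simplex `Δ`. -/
noncomputable def apexPt {d : ℕ} (r : ℝ) (y : Euc d) : Euc d := (1 + (r ^ 2)⁻¹) • y

/-- The simplex `Δ = conv(y⁰, y¹, …, y^d)`. -/
noncomputable def simplexΔ {d : ℕ} (r : ℝ) (y : Euc d) (yv : Fin d → Euc d) : Set (Euc d) :=
  convexHull ℝ (insert (apexPt r y) (Set.range yv))

/-- The vertices of `Δ`: index `0` is the apex `y⁰`, index `j+1` is `y^{j+1}`. -/
noncomputable def vertexOf {d : ℕ} (r : ℝ) (y : Euc d) (yv : Fin d → Euc d) :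
    Fin (d + 1) → Euc d :=
  Fin.cons (apexPt r y) yv

/-- The homothetic copy `Δ^j := y^j + c₂ (Δ − y^j)` of `Δ` with centre the vertex `y^j` and
ratio `c₂`. -/
noncomputable def smallSimplex {d : ℕ} (c₂ r : ℝ) (y : Euc d) (yv : Fin d → Euc d)
    (j : Fin (d + 1)) : Set (Euc d) :=
  (fun x => vertexOf r y yv j + c₂ • (x - vertexOf r y yv j)) '' simplexΔ r y yv

/-- The positive hull `pos{v j}` of a finite family of vectors. -/
def posHull {d : ℕ} {ι : Type} [Fintype ι] (v : ι → Euc d) : Set (Euc d) :=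
  {x | ∃ c : ι → ℝ, (∀ i, 0 ≤ c i) ∧ x = ∑ i, c i • v i}

/-- The closed circular cone `C(z, α)` with apex `0`, axis `{tz : t ≥ 0}` and angle `α`,
i.e. the set of `x` with `∠(x,z) ≤ α` (together with the apex `0`). -/
def circCone {d : ℕ} (z : Euc d) (α : ℝ) : Set (Euc d) :=
  {x | Real.cos α * (‖x‖ * ‖z‖) ≤ (inner ℝ x z : ℝ)}

/-!
`Δ^j` is the image of `Δ` under a homothety of ratio `c₂ ≤ 1` centred at a vertex of `Δ`, so
`vol Δ^j = c₂^d vol Δ` and `Δ^j ⊆ Δ`. By Gram's formula, `vol Δ` is `√(det G)` times the volume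
of the standard simplex, where `G` is the Gram matrix of the edges `y^j - y⁰`. Writing
`y^j - y⁰ = (y^j - y) - r⁻² y` with `y^j - y ⟂ y` gives `G = t I + (2 - t + r⁻²) J`, where `t` is
half the squared side length. The `d` vectors `y^j - y` lie in the hyperplane `y^⊥`, so their
Gram matrix `t I + (2 - t) J` is singular; this pins `t = 2d/(d-1)` and yields
`det G = t^(d-1) d / r²`. Hence `vol Δ^j ≍ 1/r ≍ (log n)^{-1/2}`.

All vertices of `Δ` satisfy `r² ≤ ‖x‖² ≤ r² + 3` (for `r ≥ 1`), so on `Δ^j` the Gaussian density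
is `e^{-r²/2}` up to a factor in `[e^{-3/2}, 1]`, and `e^{-r²/2} / r = √(log n) / (n r) ≍ 1/n`.
-/

lemma Matrix.det_smul_one_add_const {n : ℕ} {a : ℝ} (ha : a ≠ 0) (b : ℝ) :
    (a • (1 : Matrix (Fin n) (Fin n) ℝ) + Matrix.of fun _ _ => b).det
      = a ^ n * (1 + n * (b / a)) := by
  have hJ : (Matrix.of fun _ _ => b : Matrix (Fin n) (Fin n) ℝ)
      = a • Matrix.replicateCol Unit (fun _ => b / a)
          * Matrix.replicateRow Unit (fun _ => (1 : ℝ)) := by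
    ext j k
    simp [Matrix.mul_apply, mul_div_cancel₀ b ha]
  rw [hJ, Matrix.smul_mul, ← smul_add, Matrix.det_smul,
    Matrix.det_one_add_replicateCol_mul_replicateRow]
  simp [dotProduct, mul_comm]

lemma Matrix.gram_eq_of_norm_eq_of_dist_eq {ι E : Type*} [DecidableEq ι] [NormedAddCommGroup E]
    [InnerProductSpace ℝ E] {w : ι → E} {ρ s : ℝ} (hρ : ∀ i, ‖w i‖ = ρ)
    (hs : ∀ i j, i ≠ j → ‖w i - w j‖ = s) :
    Matrix.gram ℝ w = (s ^ 2 / 2) • 1 + Matrix.of fun _ _ => ρ ^ 2 - s ^ 2 / 2 := by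
  ext i j
  rcases eq_or_ne i j with rfl | hij
  · simp [Matrix.gram_apply, hρ]
  · have h := norm_sub_sq_real (w i) (w j)
    rw [hs i j hij, hρ, hρ] at h
    simp [Matrix.gram_apply, hij]
    linarith

lemma Matrix.gram_sub_smul_of_inner_eq_zero {ι E : Type*} [NormedAddCommGroup E]
    [InnerProductSpace ℝ E] {w : ι → E} {y : E} (hw : ∀ i, ⟪w i, y⟫ = 0) (c : ℝ) :
    Matrix.gram ℝ (fun i => w i - c • y)
      = Matrix.gram ℝ w + Matrix.of fun _ _ => c ^ 2 * ‖y‖ ^ 2 := by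
  have hw' : ∀ i, ⟪y, w i⟫ = 0 := fun i => by rw [real_inner_comm]; exact hw i
  ext i j
  simp only [Matrix.gram_apply, Matrix.add_apply, Matrix.of_apply, inner_sub_left, inner_sub_right,
    real_inner_smul_left, real_inner_smul_right, hw, hw', real_inner_self_eq_norm_sq,
    norm_smul, mul_pow, Real.norm_eq_abs, sq_abs]
  ring

lemma not_linearIndependent_of_forall_inner_eq_zero {ι E : Type*} [Fintype ι]
    [NormedAddCommGroup E] [InnerProductSpace ℝ E] [FiniteDimensional ℝ E]
    (hcard : Fintype.card ι = Module.finrank ℝ E) {w : ι → E} {y : E} (hy : y ≠ 0)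
    (hw : ∀ i, ⟪w i, y⟫ = 0) : ¬ LinearIndependent ℝ w := by
  intro hli
  have hmem : ∀ i, w i ∈ (ℝ ∙ y)ᗮ := fun i =>
    Submodule.mem_orthogonal_singleton_iff_inner_left.2 (hw i)
  have hli' : LinearIndependent ℝ (fun i => (⟨w i, hmem i⟩ : (ℝ ∙ y)ᗮ)) :=
    LinearIndependent.of_comp (ℝ ∙ y)ᗮ.subtype hli
  have hle := hli'.fintype_card_le_finrank
  have hsum := Submodule.finrank_add_finrank_orthogonal (ℝ ∙ y)
  rw [finrank_span_singleton hy] at hsum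
  omega

def refSimplex (d : ℕ) : Set (Euc d) :=
  convexHull ℝ (insert 0 (range (EuclideanSpace.basisFun (Fin d) ℝ)))

lemma volume_refSimplex_lt_top (d : ℕ) : volume (refSimplex d) < ⊤ :=
  (((finite_range _).insert _).isCompact_convexHull ℝ).measure_lt_top

lemma volume_refSimplex_pos (d : ℕ) : 0 < volume (refSimplex d) := by
  apply Measure.measure_pos_of_nonempty_interior
  rw [refSimplex, interior_convexHull_nonempty_iff_affineSpan_eq_top,
    AffineSubspace.affineSpan_eq_top_iff_vectorSpan_eq_top_of_nonempty ℝ (Euc d) (Euc d)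
      (insert_nonempty _ _), eq_top_iff, ← (EuclideanSpace.basisFun (Fin d) ℝ).toBasis.span_eq,
    Submodule.span_le]
  rintro _ ⟨j, rfl⟩
  simpa using vsub_mem_vectorSpan ℝ
    (mem_insert_of_mem 0 (mem_range_self (f := EuclideanSpace.basisFun (Fin d) ℝ) j))
    (mem_insert (0 : Euc d) _)

lemma volume_convexHull_insert_range {d : ℕ} (a : Euc d) (u : Fin d → Euc d) :
    volume (convexHull ℝ (insert a (range u)))
      = ENNReal.ofReal √(Matrix.gram ℝ (fun j => u j - a)).det * volume (refSimplex d) := by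
  let b := EuclideanSpace.basisFun (Fin d) ℝ
  let T : Euc d →ₗ[ℝ] Euc d := b.toBasis.constr ℝ fun j => u j - a
  let f : Euc d →ᵃ[ℝ] Euc d := T.toAffineMap + AffineMap.const ℝ (Euc d) a
  have himage : convexHull ℝ (insert a (range u)) = (· + a) '' (T '' refSimplex d) := by
    rw [image_image, refSimplex, show (fun x => T x + a) = f from rfl, AffineMap.image_convexHull,
      image_insert_eq, ← range_comp]
    congr 3
    · simp [f]
    · ext j; simp [f, T, b]
  have hdet : |LinearMap.det T| = √(Matrix.gram ℝ (fun j => u j - a)).det := by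
    rw [← LinearMap.normDet_eq_abs_det, ← Real.sqrt_sq (LinearMap.normDet_nonneg T)]
    congr 1
    simpa [T, b] using T.normDet_sq_eq_det_gram b
  rw [himage, image_add_right, measure_preimage_add_right, Measure.addHaar_image_linearMap, hdet]

/-- `t^(d-1) d`, where `t = 2d/(d-1)` is half the squared side length of a regular simplex with `d`
vertices and circumradius `√2`. -/
def simplexGramConst (d : ℕ) : ℝ := (2 * d / ((d : ℝ) - 1)) ^ (d - 1) * d

lemma simplexGramConst_pos {d : ℕ} (hd : 1 ≤ d) : 0 < simplexGramConst d := by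
  obtain rfl | hd := hd.eq_or_lt
  · norm_num [simplexGramConst]
  · have : (1 : ℝ) < d := by exact_mod_cast hd
    have : (0 : ℝ) < d - 1 := by linarith
    unfold simplexGramConst
    positivity

namespace SimplexConfig

variable {d : ℕ} {r : ℝ} {y : Euc d} {yv : Fin d → Euc d}

lemma inner_sub_self (cfg : SimplexConfig d r y yv) (j : Fin d) : ⟪yv j - y, y⟫ = 0 := by
  rw [inner_sub_left, cfg.mem_tangent, real_inner_self_eq_norm_sq, cfg.norm_y, sub_self]

/-- The `d` vectors `y^j - y` lie in the hyperplane `y^⊥`, so their Gram matrix is singular; this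
pins the half squared side length `t` of the regular simplex. -/
lemma exists_gram_sub_eq (cfg : SimplexConfig d r y yv) (hr : r ≠ 0) :
    ∃ t : ℝ, t ≠ 0 ∧ t + d * (2 - t) = 0 ∧
      Matrix.gram ℝ (fun j => yv j - y)
        = t • (1 : Matrix (Fin d) (Fin d) ℝ) + Matrix.of fun _ _ => 2 - t := by
  obtain ⟨s, hs, hreg⟩ := cfg.regular
  have ht : s ^ 2 / 2 ≠ 0 := by positivity
  have hgram : Matrix.gram ℝ (fun j => yv j - y)
      = (s ^ 2 / 2) • 1 + Matrix.of fun _ _ => 2 - s ^ 2 / 2 := by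
    rw [Matrix.gram_eq_of_norm_eq_of_dist_eq cfg.circumradius (s := s)
      (fun j k hjk => by rw [sub_sub_sub_cancel_right]; exact hreg j k hjk)]
    norm_num
  refine ⟨s ^ 2 / 2, ht, ?_, hgram⟩
  have hy : y ≠ 0 := by rw [← norm_ne_zero_iff, cfg.norm_y]; exact hr
  have hdep := not_linearIndependent_of_forall_inner_eq_zero (by simp) hy cfg.inner_sub_self
  rw [← Matrix.det_gram_ne_zero_iff_linearIndependent, not_not, hgram,
    Matrix.det_smul_one_add_const ht] at hdep
  have := (mul_eq_zero.1 hdep).resolve_left (pow_ne_zero _ ht)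
  field_simp at this
  linarith

lemma gram_sub_apexPt (cfg : SimplexConfig d r y yv) :
    Matrix.gram ℝ (fun j => yv j - apexPt r y)
      = Matrix.gram ℝ (fun j => yv j - y) + Matrix.of fun _ _ => (r ^ 2)⁻¹ := by
  have hv : (fun j => yv j - apexPt r y) = fun j => (yv j - y) - (r ^ 2)⁻¹ • y := by
    ext1 j
    rw [apexPt, add_smul, one_smul]
    abel
  rw [hv, Matrix.gram_sub_smul_of_inner_eq_zero cfg.inner_sub_self, cfg.norm_y]
  congr
  field_simp

lemma det_gram_sub_apexPt (cfg : SimplexConfig d r y yv) (hr : r ≠ 0) :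
    (Matrix.gram ℝ (fun j => yv j - apexPt r y)).det = simplexGramConst d / r ^ 2 := by
  obtain ⟨t, ht, hkey, hgram⟩ := cfg.exists_gram_sub_eq hr
  have hd : 2 ≤ d := by
    by_contra! hd
    interval_cases d
    · exact ht (by simpa using hkey)
    · norm_num at hkey
  have hd1 : (d : ℝ) - 1 ≠ 0 := by
    have : (2 : ℝ) ≤ d := by exact_mod_cast hd
    linarith
  have ht' : t = 2 * d / ((d : ℝ) - 1) := by
    field_simp
    linarith
  have hJ : (Matrix.of fun _ _ => 2 - t) + (Matrix.of fun _ _ => (r ^ 2)⁻¹)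
      = (Matrix.of fun _ _ => 2 - t + (r ^ 2)⁻¹ : Matrix (Fin d) (Fin d) ℝ) := rfl
  have hfactor : 1 + d * ((2 - t + (r ^ 2)⁻¹) / t) = d / (t * r ^ 2) := by
    field_simp
    linear_combination r ^ 2 * hkey
  rw [cfg.gram_sub_apexPt, hgram, add_assoc, hJ, Matrix.det_smul_one_add_const ht, hfactor,
    simplexGramConst, ← ht', ← pow_sub_one_mul (by omega : d ≠ 0)]
  field_simp

lemma volume_simplexΔ (cfg : SimplexConfig d r y yv) (hr : 0 < r) :
    volume (simplexΔ r y yv)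
      = ENNReal.ofReal (√(simplexGramConst d) / r) * volume (refSimplex d) := by
  rw [simplexΔ, volume_convexHull_insert_range, cfg.det_gram_sub_apexPt hr.ne',
    Real.sqrt_div' _ (sq_nonneg r), Real.sqrt_sq hr.le]

lemma norm_sq_apexPt (cfg : SimplexConfig d r y yv) (hr : r ≠ 0) :
    ‖apexPt r y‖ ^ 2 = r ^ 2 + 2 + (r ^ 2)⁻¹ := by
  rw [apexPt, norm_smul, cfg.norm_y, Real.norm_eq_abs, mul_pow, sq_abs]
  field_simp
  ring

lemma norm_sq_vertex (cfg : SimplexConfig d r y yv) (j : Fin d) : ‖yv j‖ ^ 2 = r ^ 2 + 2 := by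
  have h := norm_sub_sq_real (yv j) y
  rw [cfg.circumradius, Real.sq_sqrt zero_le_two, cfg.mem_tangent, cfg.norm_y] at h
  linarith

lemma sq_le_inner_of_mem_simplexΔ (cfg : SimplexConfig d r y yv) {x : Euc d}
    (hx : x ∈ simplexΔ r y yv) : r ^ 2 ≤ ⟪y, x⟫ := by
  refine convexHull_min ?_ (convex_halfSpace_ge (innerₛₗ ℝ y).isLinear (r ^ 2)) hx
  rintro _ (rfl | ⟨j, rfl⟩) <;> simp only [mem_ofPred_eq, innerₛₗ_apply_apply]
  · rw [apexPt, real_inner_smul_right, real_inner_self_eq_norm_sq, cfg.norm_y]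
    nlinarith [mul_nonneg (inv_nonneg.2 (sq_nonneg r)) (sq_nonneg r)]
  · rw [real_inner_comm, cfg.mem_tangent]

lemma sq_le_norm_sq_of_mem_simplexΔ (cfg : SimplexConfig d r y yv) {x : Euc d}
    (hx : x ∈ simplexΔ r y yv) : r ^ 2 ≤ ‖x‖ ^ 2 := by
  have h := (cfg.sq_le_inner_of_mem_simplexΔ hx).trans (real_inner_le_norm y x)
  rw [cfg.norm_y] at h
  nlinarith [norm_nonneg x, cfg.norm_y ▸ norm_nonneg y]

lemma norm_sq_le_of_mem_simplexΔ (cfg : SimplexConfig d r y yv) (hr : 1 ≤ r) {x : Euc d}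
    (hx : x ∈ simplexΔ r y yv) : ‖x‖ ^ 2 ≤ r ^ 2 + 3 := by
  suffices hball : simplexΔ r y yv ⊆ Metric.closedBall 0 √(r ^ 2 + 3) by
    have := hball hx
    rw [mem_closedBall_zero_iff, Real.le_sqrt (norm_nonneg x) (by positivity)] at this
    exact this
  refine convexHull_min ?_ (convex_closedBall _ _)
  rintro _ (rfl | ⟨j, rfl⟩) <;>
    rw [mem_closedBall_zero_iff, Real.le_sqrt (norm_nonneg _) (by positivity)]
  · rw [cfg.norm_sq_apexPt (by positivity)]
    have : (r ^ 2)⁻¹ ≤ 1 := inv_le_one_of_one_le₀ (one_le_pow₀ hr)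
    linarith
  · rw [cfg.norm_sq_vertex]
    linarith

end SimplexConfig

section SmallSimplex

variable {d : ℕ} {c₂ r : ℝ} {y : Euc d} {yv : Fin d → Euc d}

lemma smallSimplex_eq_image_homothety (j : Fin (d + 1)) :
    smallSimplex c₂ r y yv j = AffineMap.homothety (vertexOf r y yv j) c₂ '' simplexΔ r y yv := by
  rw [smallSimplex]
  congr with x
  rw [AffineMap.homothety_apply, vsub_eq_sub, vadd_eq_add, add_comm]

lemma volume_smallSimplex (j : Fin (d + 1)) :
    volume (smallSimplex c₂ r y yv j) = ENNReal.ofReal |c₂ ^ d| * volume (simplexΔ r y yv) := by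
  rw [smallSimplex_eq_image_homothety, Measure.addHaar_image_homothety, finrank_euclideanSpace_fin]

lemma isCompact_smallSimplex (j : Fin (d + 1)) : IsCompact (smallSimplex c₂ r y yv j) := by
  rw [smallSimplex_eq_image_homothety]
  exact (((finite_range yv).insert _).isCompact_convexHull ℝ).image
    (AffineMap.homothety_continuous _ _)

lemma vertexOf_mem_simplexΔ (j : Fin (d + 1)) : vertexOf r y yv j ∈ simplexΔ r y yv := by
  refine subset_convexHull ℝ _ ?_
  cases j using Fin.cases with
  | zero => exact mem_insert _ _
  | succ k => exact mem_insert_of_mem _ (mem_range_self k)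

lemma smallSimplex_subset_simplexΔ (hc₂ : 0 ≤ c₂) (hc₂' : c₂ ≤ 1) (j : Fin (d + 1)) :
    smallSimplex c₂ r y yv j ⊆ simplexΔ r y yv := by
  rintro _ ⟨x, hx, rfl⟩
  exact (convex_convexHull ℝ _).add_smul_sub_mem (vertexOf_mem_simplexΔ j) hx ⟨hc₂, hc₂'⟩

end SmallSimplex

lemma stdGaussian_toReal_mem_Icc {d : ℕ} {s : Set (Euc d)} (hs : MeasurableSet s)
    (hfin : volume s ≠ ⊤) {a b : ℝ} (ha : ∀ x ∈ s, a ≤ ‖x‖ ^ 2) (hb : ∀ x ∈ s, ‖x‖ ^ 2 ≤ b) :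
    (2 * π) ^ (-(d : ℝ) / 2) * exp (-b / 2) * (volume s).toReal ≤ (stdGaussian d s).toReal ∧
      (stdGaussian d s).toReal ≤ (2 * π) ^ (-(d : ℝ) / 2) * exp (-a / 2) * (volume s).toReal := by
  have hC : 0 < (2 * π) ^ (-(d : ℝ) / 2) := by positivity
  have hupper : stdGaussian d s
      ≤ ENNReal.ofReal ((2 * π) ^ (-(d : ℝ) / 2) * exp (-a / 2)) * volume s := by
    rw [_root_.stdGaussian, withDensity_apply _ hs, ← setLIntegral_const]
    refine setLIntegral_mono' hs fun x hx => ENNReal.ofReal_le_ofReal ?_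
    gcongr
    exact ha x hx
  have hlower : ENNReal.ofReal ((2 * π) ^ (-(d : ℝ) / 2) * exp (-b / 2)) * volume s
      ≤ stdGaussian d s := by
    rw [_root_.stdGaussian, withDensity_apply _ hs, ← setLIntegral_const]
    refine setLIntegral_mono' hs fun x hx => ENNReal.ofReal_le_ofReal ?_
    gcongr
    exact hb x hx
  have hγfin := (hupper.trans_lt (ENNReal.mul_lt_top ENNReal.ofReal_lt_top hfin.lt_top)).ne
  constructor
  · simpa [ENNReal.toReal_mul, ENNReal.toReal_ofReal, hC.le, exp_nonneg] using
      ENNReal.toReal_mono hγfin hlower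
  · simpa [ENNReal.toReal_mul, ENNReal.toReal_ofReal, hC.le, exp_nonneg] using
      ENNReal.toReal_mono (ENNReal.mul_ne_top ENNReal.ofReal_ne_top hfin) hupper

def smallSimplexConst (d : ℕ) (c₂ : ℝ) : ℝ :=
  c₂ ^ d * √(simplexGramConst d) * (volume (refSimplex d)).toReal

lemma smallSimplexConst_pos {d : ℕ} (hd : 1 ≤ d) {c₂ : ℝ} (hc₂ : 0 < c₂) :
    0 < smallSimplexConst d c₂ := by
  have := ENNReal.toReal_pos (volume_refSimplex_pos d).ne' (volume_refSimplex_lt_top d).ne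
  have := simplexGramConst_pos hd
  unfold smallSimplexConst
  positivity

namespace SimplexConfig

variable {d : ℕ} {c₂ r : ℝ} {y : Euc d} {yv : Fin d → Euc d}

lemma volume_smallSimplex_toReal (cfg : SimplexConfig d r y yv) (hr : 0 < r) (hc₂ : 0 ≤ c₂)
    (j : Fin (d + 1)) :
    (volume (smallSimplex c₂ r y yv j)).toReal = smallSimplexConst d c₂ / r := by
  rw [volume_smallSimplex, cfg.volume_simplexΔ hr, ENNReal.toReal_mul, ENNReal.toReal_mul,
    ENNReal.toReal_ofReal (abs_nonneg _), ENNReal.toReal_ofReal (by positivity),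
    abs_of_nonneg (by positivity), smallSimplexConst]
  ring

lemma stdGaussian_smallSimplex_toReal_mem_Icc (cfg : SimplexConfig d r y yv) (hr : 1 ≤ r)
    (hc₂ : 0 ≤ c₂) (hc₂' : c₂ ≤ 1) (j : Fin (d + 1)) :
    (2 * π) ^ (-(d : ℝ) / 2) * exp (-3 / 2) * smallSimplexConst d c₂ * (exp (-r ^ 2 / 2) / r)
        ≤ (stdGaussian d (smallSimplex c₂ r y yv j)).toReal ∧
      (stdGaussian d (smallSimplex c₂ r y yv j)).toReal
        ≤ (2 * π) ^ (-(d : ℝ) / 2) * smallSimplexConst d c₂ * (exp (-r ^ 2 / 2) / r) := by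
  have hsub := smallSimplex_subset_simplexΔ (r := r) (y := y) (yv := yv) hc₂ hc₂' j
  obtain ⟨hlo, hhi⟩ := stdGaussian_toReal_mem_Icc (isCompact_smallSimplex j).measurableSet
    (by rw [volume_smallSimplex, cfg.volume_simplexΔ (by linarith)]
        exact ENNReal.mul_ne_top ENNReal.ofReal_ne_top
          (ENNReal.mul_ne_top ENNReal.ofReal_ne_top (volume_refSimplex_lt_top d).ne))
    (fun x hx => cfg.sq_le_norm_sq_of_mem_simplexΔ (hsub hx))
    (fun x hx => cfg.norm_sq_le_of_mem_simplexΔ hr (hsub hx))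
  rw [cfg.volume_smallSimplex_toReal (by linarith) hc₂] at hlo hhi
  rw [show -(r ^ 2 + 3) / 2 = -3 / 2 + -r ^ 2 / 2 by ring, exp_add] at hlo
  constructor
  · convert hlo using 1
    ring
  · convert hhi using 1
    ring

end SimplexConfig

lemma Real.rpow_neg_one_half_eq_inv_sqrt {x : ℝ} (hx : 0 ≤ x) : x ^ (-(1 : ℝ) / 2) = (√x)⁻¹ := by
  rw [neg_div, Real.rpow_neg hx, ← Real.sqrt_eq_rpow]

section Radius

variable {n : ℕ}

lemma one_le_log_of_three_le (hn : 3 ≤ n) : 1 ≤ log n := by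
  rw [Real.le_log_iff_exp_le (by positivity)]
  exact (exp_one_lt_d9.trans_le (by norm_num : (2.7182818286 : ℝ) ≤ 3)).le.trans
    (by exact_mod_cast hn)

lemma rr_sq (hn : 3 ≤ n) : rr n ^ 2 = 2 * log n - log (log n) := by
  have hL := one_le_log_of_three_le hn
  have := log_le_sub_one_of_pos (zero_lt_one.trans_le hL)
  exact Real.sq_sqrt (by linarith)

lemma sqrt_log_le_rr (hn : 3 ≤ n) : √(log n) ≤ rr n ∧ rr n ≤ √2 * √(log n) := by
  have hL := one_le_log_of_three_le hn
  have h0 := log_nonneg hL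
  have h1 := log_le_sub_one_of_pos (zero_lt_one.trans_le hL)
  rw [rr, ← Real.sqrt_mul zero_le_two]
  exact ⟨Real.sqrt_le_sqrt (by linarith), Real.sqrt_le_sqrt (by linarith)⟩

lemma one_le_rr (hn : 3 ≤ n) : 1 ≤ rr n :=
  (Real.one_le_sqrt.2 (one_le_log_of_three_le hn)).trans (sqrt_log_le_rr hn).1

lemma exp_neg_rr_sq_div_two (hn : 3 ≤ n) : exp (-rr n ^ 2 / 2) = √(log n) / n := by
  have hL := zero_lt_one.trans_le (one_le_log_of_three_le hn)
  rw [rr_sq hn, show -(2 * log n - log (log n)) / 2 = log (log n) / 2 - log n by ring, exp_sub,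
    ← Real.log_sqrt hL.le, exp_log (Real.sqrt_pos.2 hL), exp_log (by positivity)]

lemma inv_rr_mem_Icc (hn : 3 ≤ n) :
    (√2)⁻¹ * (√(log n))⁻¹ ≤ (rr n)⁻¹ ∧ (rr n)⁻¹ ≤ (√(log n))⁻¹ := by
  have hL := Real.sqrt_pos.2 (zero_lt_one.trans_le (one_le_log_of_three_le hn))
  obtain ⟨hlo, hhi⟩ := sqrt_log_le_rr hn
  rw [← mul_inv]
  exact ⟨inv_anti₀ (hL.trans_le hlo) hhi, inv_anti₀ hL hlo⟩

lemma exp_neg_rr_sq_div_rr_mem_Icc (hn : 3 ≤ n) :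
    (√2)⁻¹ / n ≤ exp (-rr n ^ 2 / 2) / rr n ∧ exp (-rr n ^ 2 / 2) / rr n ≤ 1 / n := by
  have hL := Real.sqrt_pos.2 (zero_lt_one.trans_le (one_le_log_of_three_le hn))
  have hc : 0 ≤ √(log n) / n := by positivity
  obtain ⟨hlo, hhi⟩ := inv_rr_mem_Icc hn
  rw [exp_neg_rr_sq_div_two hn, div_eq_mul_inv (√(log n) / n)]
  constructor
  · calc (√2)⁻¹ / n = √(log n) / n * ((√2)⁻¹ * (√(log n))⁻¹) := by field_simp
      _ ≤ _ := mul_le_mul_of_nonneg_left hlo hc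
  · calc √(log n) / n * (rr n)⁻¹
        _ ≤ √(log n) / n * (√(log n))⁻¹ := mul_le_mul_of_nonneg_left hhi hc
        _ = 1 / n := by field_simp

end Radius

/-- Each homothetic copy `Δ^j = y^j + c₂(Δ − y^j)` has Lebesgue volume of order
`(log n)^{−1/2}` and Gaussian measure of order `n^{−1}`. -/
theorem small_simplex_volume_and_gaussian_measure (d : ℕ) (hd : 1 ≤ d)
    (c₂ : ℝ) (hc₂ : 0 < c₂) (hc₂' : c₂ < 1) :
    ∃ a₁ b₁ a₂ b₂ : ℝ, 0 < a₁ ∧ 0 < b₁ ∧ 0 < a₂ ∧ 0 < b₂ ∧ ∃ N : ℕ, ∀ n : ℕ, N ≤ n →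
      ∀ (y : Euc d) (yv : Fin d → Euc d), SimplexConfig d (rr n) y yv →
        ∀ j : Fin (d + 1),
          (a₁ * Real.log n ^ (-(1 : ℝ) / 2) ≤
              (volume (smallSimplex c₂ (rr n) y yv j)).toReal ∧
            (volume (smallSimplex c₂ (rr n) y yv j)).toReal ≤
              b₁ * Real.log n ^ (-(1 : ℝ) / 2)) ∧
          (a₂ / n ≤ (stdGaussian d (smallSimplex c₂ (rr n) y yv j)).toReal ∧
            (stdGaussian d (smallSimplex c₂ (rr n) y yv j)).toReal ≤ b₂ / n) := by
  set K := smallSimplexConst d c₂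
  set C := (2 * π) ^ (-(d : ℝ) / 2)
  have hK : 0 < K := smallSimplexConst_pos hd hc₂
  have hC : 0 < C := by positivity
  refine ⟨K * (√2)⁻¹, K, C * exp (-3 / 2) * K * (√2)⁻¹, C * K, by positivity, hK, by positivity,
    by positivity, 3, fun n hn y yv cfg j => ?_⟩
  have hr := one_le_rr hn
  obtain ⟨hinv_lo, hinv_hi⟩ := inv_rr_mem_Icc hn
  obtain ⟨hexp_lo, hexp_hi⟩ := exp_neg_rr_sq_div_rr_mem_Icc hn
  obtain ⟨hγ_lo, hγ_hi⟩ := cfg.stdGaussian_smallSimplex_toReal_mem_Icc hr hc₂.le hc₂'.le j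
  rw [cfg.volume_smallSimplex_toReal (by linarith) hc₂.le,
    Real.rpow_neg_one_half_eq_inv_sqrt (zero_le_one.trans (one_le_log_of_three_le hn))]
  refine ⟨⟨?_, ?_⟩, ?_, ?_⟩
  · rw [div_eq_mul_inv, mul_assoc]
    exact mul_le_mul_of_nonneg_left hinv_lo hK.le
  · rw [div_eq_mul_inv]
    exact mul_le_mul_of_nonneg_left hinv_hi hK.le
  · rw [mul_div_assoc]
    exact (mul_le_mul_of_nonneg_left hexp_lo (by positivity)).trans hγ_lo
  · rw [← mul_one_div]
    exact hγ_hi.trans (mul_le_mul_of_nonneg_left hexp_hi (by positivity))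

end
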